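/- arXiv:2206.14338 — 6 statements merged into one kernel-verified Lean document; each statement's English description precedes it below -/
import Mathlib

section
/- Define Γ_{c;ab} = ∂B_{ab}/∂ξ_c − B_{ac}B_{cb} for smooth scalar functions B_{ab}(ξ_p,ξ_q,ξ_r,ξ_s) with pairwise distinct labels, and define the Lagrangian density 𝓛_{pqr} = ½(B_{rq}∂_p B_{qr} − B_{qr}∂_p B_{rq}) + ½(B_{qp}∂_r B_{pq} − B_{pq}∂_r B_{qp}) + ½(B_{pr}∂_q B_{rp} − B_{rp}∂_q B_{pr}) + B_{rp}B_{pq}B_{qr} − B_{rq}B_{qp}B_{pr}. Then the following identity holds identically in the fields and their derivatives: ∂_s 𝓛_{pqr} − ∂_p 𝓛_{qrs} + ∂_q 𝓛_{rsp} − ∂_r 𝓛_{spq} = Γ_{s;rq}Γ_{p;qr} − Γ_{p;rq}Γ_{s;qr} + Γ_{s;qp}Γ_{r;pq} − Γ_{r;qp}Γ_{s;pq} + Γ_{s;pr}Γ_{q;rp} − Γ_{q;pr}Γ_{s;rp} + Γ_{q;sr}Γ_{p;rs} − Γ_{p;sr}Γ_{q;rs} + Γ_{p;sq}Γ_{r;qs}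 − Γ_{r;sq}Γ_{p;qs} + Γ_{q;ps}Γ_{r;sp} − Γ_{r;ps}Γ_{q;sp}, assuming all mixed second partial derivatives of the B_{ab} commute. -/
/-- Partial derivative in the `i`-th coordinate direction. -/
noncomputable def pd (i : Fin 4) (f : (Fin 4 → ℝ) → ℝ) (x : Fin 4 → ℝ) : ℝ :=
  fderiv ℝ f x (Pi.single i 1)

/-- `Γ_{c;ab} = ∂_c B_{ab} − B_{ac} B_{cb}`. -/
noncomputable def Gam (B : Fin 4 → Fin 4 → (Fin 4 → ℝ) → ℝ)
    (c a b : Fin 4) (x : Fin 4 → ℝ) : ℝ :=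
  pd c (B a b) x - B a c x * B c b x

/-- The Darboux Lagrangian density `𝓛_{pqr}`. -/
noncomputable def Lag (B : Fin 4 → Fin 4 → (Fin 4 → ℝ) → ℝ)
    (p q r : Fin 4) (x : Fin 4 → ℝ) : ℝ :=
  (1/2) * (B r q x * pd p (B q r) x - B q r x * pd p (B r q) x)
  + (1/2) * (B q p x * pd r (B p q) x - B p q x * pd r (B q p) x)
  + (1/2) * (B p r x * pd q (B r p) x - B r p x * pd q (B p r) x)
  + B r p x * B p q x * B q r x - B r q x * B q p x * B p r x

lemma pd_add (i : Fin 4) {f g : (Fin 4 → ℝ) → ℝ} {x} (hf : DifferentiableAt ℝ f x)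
    (hg : DifferentiableAt ℝ g x) :
    pd i (fun y => f y + g y) x = pd i f x + pd i g x := by
  simp [pd, fderiv_fun_add hf hg]

lemma pd_sub (i : Fin 4) {f g : (Fin 4 → ℝ) → ℝ} {x} (hf : DifferentiableAt ℝ f x)
    (hg : DifferentiableAt ℝ g x) :
    pd i (fun y => f y - g y) x = pd i f x - pd i g x := by
  simp [pd, fderiv_fun_sub hf hg]

lemma pd_mul (i : Fin 4) {f g : (Fin 4 → ℝ) → ℝ} {x} (hf : DifferentiableAt ℝ f x)
    (hg : DifferentiableAt ℝ g x) :
    pd i (fun y => f y * g y) x = pd i f x * g x + f x * pd i g x := by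
  simp [pd, fderiv_fun_mul hf hg]; ring

lemma pd_const_mul (i : Fin 4) (c : ℝ) {g : (Fin 4 → ℝ) → ℝ} {x}
    (hg : DifferentiableAt ℝ g x) :
    pd i (fun y => c * g y) x = c * pd i g x := by
  simp [pd, fderiv_const_mul hg c]

lemma pd_const (i : Fin 4) (c : ℝ) (x : Fin 4 → ℝ) :
    pd i (fun _ => c) x = 0 := by
  simp [pd]

lemma contDiff_pd (i : Fin 4) {f : (Fin 4 → ℝ) → ℝ} (hf : ContDiff ℝ (⊤ : ℕ∞) f) :
    ContDiff ℝ (⊤ : ℕ∞) (pd i f) :=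
  (hf.fderiv_right (by simp)).clm_apply contDiff_const

lemma pd_comm {f : (Fin 4 → ℝ) → ℝ} (hf : ContDiff ℝ (⊤ : ℕ∞) f) (i j : Fin 4) (x : Fin 4 → ℝ) :
    pd i (pd j f) x = pd j (pd i f) x := by
  have hfd : DifferentiableAt ℝ (fderiv ℝ f) x :=
    ((hf.fderiv_right (m := 1) (WithTop.coe_le_coe.mpr le_top)).differentiable one_ne_zero) x
  have h1 : ∀ (k l : Fin 4), pd k (pd l f) x
      = fderiv ℝ (fderiv ℝ f) x (Pi.single k 1) (Pi.single l 1) := by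
    intro k l
    have : pd l f = fun y => (fderiv ℝ f y) (Pi.single l 1) := rfl
    rw [pd, this, fderiv_clm_apply hfd (differentiableAt_const _)]
    simp
  rw [h1, h1]
  exact (hf.contDiffAt.isSymmSndFDerivAt (by simp [minSmoothness_of_isRCLikeNormedField]; exact WithTop.coe_le_coe.mpr le_top)) _ _

lemma pd_Lag (B : Fin 4 → Fin 4 → (Fin 4 → ℝ) → ℝ) (a b c i : Fin 4) (x : Fin 4 → ℝ)
    (hab : ContDiff ℝ (⊤ : ℕ∞) (B a b)) (hba : ContDiff ℝ (⊤ : ℕ∞) (B b a))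
    (hbc : ContDiff ℝ (⊤ : ℕ∞) (B b c)) (hcb : ContDiff ℝ (⊤ : ℕ∞) (B c b))
    (hac : ContDiff ℝ (⊤ : ℕ∞) (B a c)) (hca : ContDiff ℝ (⊤ : ℕ∞) (B c a)) :
    pd i (Lag B a b c) x =
      (1/2) * (pd i (B c b) x * pd a (B b c) x + B c b x * pd i (pd a (B b c)) x
        - pd i (B b c) x * pd a (B c b) x - B b c x * pd i (pd a (B c b)) x)
      + (1/2) * (pd i (B b a) x * pd c (B a b) x + B b a x * pd i (pd c (B a b)) x
        - pd i (B a b) x * pd c (B b a) x - B a b x * pd i (pd c (B b a)) x)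
      + (1/2) * (pd i (B a c) x * pd b (B c a) x + B a c x * pd i (pd b (B c a)) x
        - pd i (B c a) x * pd b (B a c) x - B c a x * pd i (pd b (B a c)) x)
      + pd i (B c a) x * B a b x * B b c x + B c a x * pd i (B a b) x * B b c x
        + B c a x * B a b x * pd i (B b c) x
      - pd i (B c b) x * B b a x * B a c x - B c b x * pd i (B b a) x * B a c x
        - B c b x * B b a x * pd i (B a c) x := by
  have Dab : Differentiable ℝ (B a b) := hab.differentiable (by simp)
  have Dba : Differentiable ℝ (B b a) := hba.differentiable (by simp)
  have Dbc : Differentiable ℝ (B b c) := hbc.differentiable (by simp)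
  have Dcb : Differentiable ℝ (B c b) := hcb.differentiable (by simp)
  have Dac : Differentiable ℝ (B a c) := hac.differentiable (by simp)
  have Dca : Differentiable ℝ (B c a) := hca.differentiable (by simp)
  have Pab' : Differentiable ℝ (pd a (B a b)) := (contDiff_pd a hab).differentiable (by simp)
  have Pab'' : Differentiable ℝ (pd c (B a b)) := (contDiff_pd c hab).differentiable (by simp)
  have Pba' : Differentiable ℝ (pd c (B b a)) := (contDiff_pd c hba).differentiable (by simp)
  have Pbc' : Differentiable ℝ (pd a (B b c)) := (contDiff_pd a hbc).differentiable (by simp)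
  have Pcb' : Differentiable ℝ (pd a (B c b)) := (contDiff_pd a hcb).differentiable (by simp)
  have Pac' : Differentiable ℝ (pd b (B a c)) := (contDiff_pd b hac).differentiable (by simp)
  have Pca' : Differentiable ℝ (pd b (B c a)) := (contDiff_pd b hca).differentiable (by simp)
  unfold Lag
  simp (disch := fun_prop) only [pd_add, pd_sub, pd_mul, pd_const_mul, pd_const]
  ring

/-- the double-zero identity for the Lagrangian 3-form of the
generalised Darboux system. -/
theorem darboux_double_zero_identity
    (B : Fin 4 → Fin 4 → (Fin 4 → ℝ) → ℝ)
    (hsmooth : ∀ a b, a ≠ b → ContDiff ℝ (⊤ : ℕ∞) (B a b))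
    (p q r s : Fin 4)
    (hpq : p ≠ q) (hpr : p ≠ r) (hps : p ≠ s)
    (hqr : q ≠ r) (hqs : q ≠ s) (hrs : r ≠ s) :
    ∀ x : Fin 4 → ℝ,
      pd s (Lag B p q r) x - pd p (Lag B q r s) x
        + pd q (Lag B r s p) x - pd r (Lag B s p q) x
      = Gam B s r q x * Gam B p q r x - Gam B p r q x * Gam B s q r x
        + Gam B s q p x * Gam B r p q x - Gam B r q p x * Gam B s p q x
        + Gam B s p r x * Gam B q r p x - Gam B q p r x * Gam B s r p x
        + Gam B q s r x * Gam B p r s x - Gam B p s r x * Gam B q r s x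
        + Gam B p s q x * Gam B r q s x - Gam B r s q x * Gam B p q s x
        + Gam B q p s x * Gam B r s p x - Gam B r p s x * Gam B q s p x := by
  intro x
  have Hpq := hsmooth p q hpq
  have Hqp := hsmooth q p hpq.symm
  have Hpr := hsmooth p r hpr
  have Hrp := hsmooth r p hpr.symm
  have Hps := hsmooth p s hps
  have Hsp := hsmooth s p hps.symm
  have Hqr := hsmooth q r hqr
  have Hrq := hsmooth r q hqr.symm
  have Hqs := hsmooth q s hqs
  have Hsq := hsmooth s q hqs.symm
  have Hrs := hsmooth r s hrs
  have Hsr := hsmooth s r hrs.symm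
  rw [pd_Lag B p q r s x Hpq Hqp Hqr Hrq Hpr Hrp,
      pd_Lag B q r s p x Hqr Hrq Hrs Hsr Hqs Hsq,
      pd_Lag B r s p q x Hrs Hsr Hsp Hps Hrp Hpr,
      pd_Lag B s p q r x Hsp Hps Hpq Hqp Hsq Hqs]
  simp only [pd_comm Hqr s p, pd_comm Hrq s p,
      pd_comm Hrp s q, pd_comm Hpr s q,
      pd_comm Hpq s r, pd_comm Hqp s r,
      pd_comm Hrs q p, pd_comm Hsr q p,
      pd_comm Hqs r p, pd_comm Hsq r p,
      pd_comm Hsp r q, pd_comm Hps r q]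
  simp only [Gam]
  ring
end

section
/- The discrete Darboux system is multidimensionally consistent: suppose functions B_{ab} on a 4-dimensional lattice (with commuting shift operators T_p, T_q, T_r, T_s) satisfy Δ_c B_{ab} = B_{ac}·T_c B_{cb} for all pairwise distinct labels a,b,c ∈ {p,q,r,s}, where Δ_c = T_c − id. Then expressing B_{qr} via T_p and T_s in the two possible orders T_p T_s and T_s T_p yields identical expressions; explicitly, T_pT_s B_{qr} − (T_pB_{qs})T_pT_sB_{sr} − B_{qp}T_pT_sB_{pr} + B_{qp}(T_pB_{ps})T_pT_sB_{sr} = T_sT_p B_{qr} − (T_sB_{qp})T_sT_pB_{pr} − B_{qs}T_sT_pB_{sr} + B_{qs}(T_sB_{sp})T_sT_pB_{pr} holds as a consequence of the equations T_pB_{qs} − B_{qs} − B_{qp}T_pB_{ps} = 0 and T_sB_{qp} − B_{qp} − B_{qs}T_sB_{sp} = 0. -/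
/-- The unit shift `T_c` in the `c`-th lattice direction. -/
def Tsh (c : Fin 4) (f : (Fin 4 → ℤ) → ℝ) (n : Fin 4 → ℤ) : ℝ :=
  f (n + Pi.single c 1)

/-- multidimensional consistency of the discrete Darboux system. -/
theorem discrete_darboux_consistency
    (B : Fin 4 → Fin 4 → (Fin 4 → ℤ) → ℝ)
    (hsys : ∀ a b c, a ≠ b → a ≠ c → b ≠ c →
      ∀ n, Tsh c (B a b) n - B a b n = B a c n * Tsh c (B c b) n)
    (p q r s : Fin 4)
    (hpq : p ≠ q) (hpr : p ≠ r) (hps : p ≠ s)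
    (hqr : q ≠ r) (hqs : q ≠ s) (hrs : r ≠ s) :
    ∀ n : Fin 4 → ℤ,
      Tsh p (Tsh s (B q r)) n
        - Tsh p (B q s) n * Tsh p (Tsh s (B s r)) n
        - B q p n * Tsh p (Tsh s (B p r)) n
        + B q p n * Tsh p (B p s) n * Tsh p (Tsh s (B s r)) n
      = Tsh s (Tsh p (B q r)) n
        - Tsh s (B q p) n * Tsh s (Tsh p (B p r)) n
        - B q s n * Tsh s (Tsh p (B s r)) n
        + B q s n * Tsh s (B s p) n * Tsh s (Tsh p (B p r)) n := by
  intro n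
  have hcomm : ∀ f, Tsh p (Tsh s f) n = Tsh s (Tsh p f) n := by
    intro f
    simp only [Tsh]
    congr 1
    abel
  have h1 := hsys q s p hqs hpq.symm hps.symm n
  have h2 := hsys q p s hpq.symm hqs hps n
  rw [hcomm (B q r), hcomm (B s r), hcomm (B p r)]
  linear_combination (Tsh s (Tsh p (B p r)) n) * h2 - (Tsh s (Tsh p (B s r)) n) * h1
end

section
/- The discrete Darboux system is compatible with the continuous one: if functions B_{ab} of a continuous variable ξ_p and a discrete variable (shifted by T_s) satisfy ∂_p B_{ab} = B_{ap}B_{pb} (for labels a,b ≠ p) and Δ_s B_{ab} = B_{as}·T_s B_{sb} (for labels a,b ≠ s), with T_s commuting with ∂_p = ∂/∂ξ_p on each individual function, then ∂_p(T_s B_{qr}) = T_s(∂_p B_{qr}); i.e. applying ∂_p to B_{qr} + B_{qs}T_sB_{sr} and applying T_s to B_{qp}B_{pr} give the same result after substituting the equations of the coupled system. -/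
/-- Derivative with respect to the continuous variable `ξ_p`. -/
noncomputable def pd1 (f : ℝ × ℤ → ℝ) (z : ℝ × ℤ) : ℝ :=
  deriv (fun t => f (t, z.2)) z.1

/-- The shift `T_s : n_s ↦ n_s + 1` in the discrete variable. -/
def Ts (f : ℝ × ℤ → ℝ) (z : ℝ × ℤ) : ℝ :=
  f (z.1, z.2 + 1)

/-- compatibility of the discrete Darboux system with the
continuous one. -/
theorem discrete_continuous_darboux_compatible
    (B : Fin 4 → Fin 4 → ℝ × ℤ → ℝ)
    (hdiff : ∀ a b, a ≠ b → ∀ n : ℤ, Differentiable ℝ (fun t => B a b (t, n)))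
    (p q r s : Fin 4)
    (hpq : p ≠ q) (hpr : p ≠ r) (hps : p ≠ s)
    (hqr : q ≠ r) (hqs : q ≠ s) (hrs : r ≠ s)
    (hcont : ∀ a b, a ≠ b → a ≠ p → b ≠ p →
      ∀ z, pd1 (B a b) z = B a p z * B p b z)
    (hdisc : ∀ a b, a ≠ b → a ≠ s → b ≠ s →
      ∀ z, Ts (B a b) z = B a b z + B a s z * Ts (B s b) z) :
    ∀ z : ℝ × ℤ,
      pd1 (fun w => B q r w + B q s w * Ts (B s r) w) z
        = Ts (fun w => B q p w * B p r w) z ∧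
      pd1 (Ts (B q r)) z = Ts (pd1 (B q r)) z := by
  rintro ⟨x, n⟩
  have hasD : ∀ a b, a ≠ b → a ≠ p → b ≠ p → ∀ m : ℤ,
      HasDerivAt (fun t => B a b (t, m)) (B a p (x, m) * B p b (x, m)) x := by
    intro a b hab hap hbp m
    have h := ((hdiff a b hab m) x).hasDerivAt
    have he : deriv (fun t => B a b (t, m)) x = B a p (x, m) * B p b (x, m) :=
      hcont a b hab hap hbp (x, m)
    rwa [he] at h
  have d1 := hasD q r hqr (Ne.symm hpq) (Ne.symm hpr) n
  have d2 := hasD q s hqs (Ne.symm hpq) (Ne.symm hps) n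
  have d3 := hasD s r (Ne.symm hrs) (Ne.symm hps) (Ne.symm hpr) (n + 1)
  have H : HasDerivAt (fun t => B q r (t, n) + B q s (t, n) * B s r (t, n + 1))
      (B q p (x, n) * B p r (x, n) +
        ((B q p (x, n) * B p s (x, n)) * B s r (x, n + 1) +
          B q s (x, n) * (B s p (x, n + 1) * B p r (x, n + 1)))) x :=
    d1.add (d2.mul d3)
  -- shift relations
  have eqp : B q p (x, n + 1) = B q p (x, n) + B q s (x, n) * B s p (x, n + 1) :=
    hdisc q p (Ne.symm hpq) hqs hps (x, n)
  have epr : B p r (x, n + 1) = B p r (x, n) + B p s (x, n) * B s r (x, n + 1) :=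
    hdisc p r hpr hps hrs (x, n)
  constructor
  · show deriv (fun t => B q r (t, n) + B q s (t, n) * B s r (t, n + 1)) x
      = B q p (x, n + 1) * B p r (x, n + 1)
    rw [H.deriv, eqp, epr]; ring
  · show deriv (fun t => B q r (t, n + 1)) x = pd1 (B q r) (x, n + 1)
    have : pd1 (B q r) (x, n + 1) = deriv (fun t => B q r (t, n + 1)) x := rfl
    rw [this]
end

section
/- Let τ be a nowhere-vanishing function on a multidimensional lattice with commuting shifts T_p, T_q, T_r (associated to distinct parameters p,q,r ∈ ℂ) satisfying the Hirota bilinear equation (p−q)(T_pT_qτ)(T_rτ) + (q−r)(T_qT_rτ)(T_pτ) + (r−p)(T_rT_pτ)(T_qτ) = 0 for all triples of directions. Define S_{a,b} = (T_a⁻¹T_b τ)/τ for distinct parameters a,b among the lattice directions. Then for p distinct from a and b: (p−b)·T_p S_{a,b} − (p−a)·S_{a,b} = (a−b)·S_{a,p}·T_p S_{p,b}. -/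
/-!
The Hirota equation for the directions `p, b, a` at the point `n - e a` involves exactly the
six values of `τ` that enter the relation; dividing it by `τ n * τ (n + e p)` turns each
bilinear term into `S_{a,b}(n + e p)`, `S_{a,b}(n)` or the product `S_{a,p}(n) S_{p,b}(n + e p)`.
-/

section

variable {ι G K : Type*} [AddCommGroup G]

/-- `e i` plays the role of the unit step in direction `i`. -/
def IsHirotaKP [CommRing K] (τ : G → K) (e : ι → G) (par : ι → K) : Prop :=
  ∀ p q r : ι, p ≠ q → p ≠ r → q ≠ r → ∀ n : G,
    (par p - par q) * τ (n + e p + e q) * τ (n + e r)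
      + (par q - par r) * τ (n + e q + e r) * τ (n + e p)
      + (par r - par p) * τ (n + e r + e p) * τ (n + e q) = 0

/-- `S_{a,b} = (T_a⁻¹ T_b τ) / τ`. -/
def shiftRatio [Field K] (τ : G → K) (e : ι → G) (a b : ι) (n : G) : K :=
  τ (n - e a + e b) / τ n

theorem IsHirotaKP.at_sub [CommRing K] {τ : G → K} {e : ι → G} {par : ι → K}
    (h : IsHirotaKP τ e par) {a b p : ι} (hab : a ≠ b) (hap : a ≠ p) (hbp : b ≠ p) (n : G) :
    (par p - par b) * τ (n + e p - e a + e b) * τ n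
      + (par b - par a) * τ (n + e b) * τ (n - e a + e p)
      + (par a - par p) * τ (n + e p) * τ (n - e a + e b) = 0 := by
  have key := h p b a hbp.symm hap.symm hab.symm (n - e a)
  rwa [show n - e a + e p + e b = n + e p - e a + e b by abel,
    show n - e a + e b + e a = n + e b by abel,
    show n - e a + e a + e p = n + e p by abel,
    sub_add_cancel] at key

theorem IsHirotaKP.shiftRatio_relation [Field K] {τ : G → K} {e : ι → G} {par : ι → K}
    (h : IsHirotaKP τ e par) {a b p : ι} (hab : a ≠ b) (hap : a ≠ p) (hbp : b ≠ p) {n : G}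
    (hn : τ n ≠ 0) (hnp : τ (n + e p) ≠ 0) :
    (par p - par b) * shiftRatio τ e a b (n + e p) - (par p - par a) * shiftRatio τ e a b n
      = (par a - par b) * shiftRatio τ e a p n * shiftRatio τ e p b (n + e p) := by
  unfold shiftRatio
  rw [add_sub_cancel_right]
  field_simp
  linear_combination h.at_sub hab hap hbp n

end

theorem hirota_implies_discrete_S_relation_general
    {ι : Type*} [DecidableEq ι]
    (τ : (ι → ℤ) → ℂ)
    (par : ι → ℂ)
    (hτ : ∀ n, τ n ≠ 0)
    (hHirota : ∀ p q r : ι, p ≠ q → p ≠ r → q ≠ r → ∀ n : ι → ℤ,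
      (par p - par q) * τ (n + Pi.single p 1 + Pi.single q 1) * τ (n + Pi.single r 1)
        + (par q - par r) * τ (n + Pi.single q 1 + Pi.single r 1) * τ (n + Pi.single p 1)
        + (par r - par p) * τ (n + Pi.single r 1 + Pi.single p 1) * τ (n + Pi.single q 1)
        = 0)
    (S : ι → ι → (ι → ℤ) → ℂ)
    (hS : ∀ a b : ι, ∀ n : ι → ℤ,
      S a b n = τ (n - Pi.single a 1 + Pi.single b 1) / τ n)
    (a b p : ι) (hab : a ≠ b) (hap : a ≠ p) (hbp : b ≠ p) :
    ∀ n : ι → ℤ,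
      (par p - par b) * S a b (n + Pi.single p 1) - (par p - par a) * S a b n
        = (par a - par b) * S a p n * S p b (n + Pi.single p 1) := by
  intro n
  have hKP : IsHirotaKP τ (fun i => Pi.single i 1) par := hHirota
  obtain rfl : S = shiftRatio τ (fun i => Pi.single i 1) := by
    funext a b n
    exact hS a b n
  exact hKP.shiftRatio_relation hab hap hbp (hτ n) (hτ _)

/-- the discrete relation for `S_{a,b} = (T_a⁻¹ T_b τ)/τ` follows
from the Hirota bilinear KP equation. -/
theorem hirota_implies_discrete_S_relation
    {ι : Type*} [DecidableEq ι]
    (τ : (ι → ℤ) → ℂ)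
    (par : ι → ℂ) (hpar : Function.Injective par)
    (hτ : ∀ n, τ n ≠ 0)
    (hHirota : ∀ p q r : ι, p ≠ q → p ≠ r → q ≠ r → ∀ n : ι → ℤ,
      (par p - par q) * τ (n + Pi.single p 1 + Pi.single q 1) * τ (n + Pi.single r 1)
        + (par q - par r) * τ (n + Pi.single q 1 + Pi.single r 1) * τ (n + Pi.single p 1)
        + (par r - par p) * τ (n + Pi.single r 1 + Pi.single p 1) * τ (n + Pi.single q 1)
        = 0)
    (S : ι → ι → (ι → ℤ) → ℂ)
    (hS : ∀ a b : ι, ∀ n : ι → ℤ,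
      S a b n = τ (n - Pi.single a 1 + Pi.single b 1) / τ n)
    (a b p : ι) (hab : a ≠ b) (hap : a ≠ p) (hbp : b ≠ p) :
    ∀ n : ι → ℤ,
      (par p - par b) * S a b (n + Pi.single p 1) - (par p - par a) * S a b n
        = (par a - par b) * S a p n * S p b (n + Pi.single p 1) :=
  hirota_implies_discrete_S_relation_general τ par hτ hHirota S hS a b p hab hap hbp
end

section
/- Let τ be a nowhere-vanishing smooth function of variables ξ_p (p in a parameter set) and lattice variables with shifts T_a, satisfying the differential-difference equation (p−q)(τ·T_q(∂_pτ) − (T_qτ)·∂_pτ) = τ·T_qτ − (T_pτ)·(T_qT_p⁻¹τ), and the Hirota bilinear equation of the previous context. Define S_{a,b} = (T_a⁻¹T_bτ)/τ. Then (p−a)(p−b)·∂S_{a,b}/∂ξ_p = (a−b)·(S_{a,p}S_{p,b} − S_{a,b}) for pairwise distinct a,b,p. -/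
/-!
Put `m = T_a⁻¹ n`, so that `S_{a,b} = τ(T_b m) / τ(T_a m)`. After multiplying by
`(p-a)(p-b) τ(m)`, the quotient-rule numerator of `∂_p S_{a,b}` is `(p-a) τ(T_a m)` times the
differential-difference equation for `(p, b)` at `m` minus `(p-b) τ(T_b m)` times the one for
`(p, a)` at `m`. The bilinear terms left over are `τ(T_p m)` times the Hirota equation for
`(a, b, p)` at `T_p⁻¹ m`; cancelling `τ(m) ≠ 0` gives the relation.
-/

/-- Partial derivative with respect to the continuous Miwa variable `ξ_p`
(at fixed lattice point `n`). -/
noncomputable def pdx {N : ℕ} (p : Fin N)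
    (f : (Fin N → ℝ) → (Fin N → ℤ) → ℂ) (x : Fin N → ℝ) (n : Fin N → ℤ) : ℂ :=
  fderiv ℝ (fun y => f y n) x (Pi.single p 1)

open ContinuousLinearMap in
theorem fderiv_fun_div_apply {𝕜 𝕜' E : Type*} [NontriviallyNormedField 𝕜] [NormedField 𝕜']
    [NormedAlgebra 𝕜 𝕜'] [NormedAddCommGroup E] [NormedSpace 𝕜 E]
    {u v : E → 𝕜'} {x : E} (hu : DifferentiableAt 𝕜 u x) (hv : DifferentiableAt 𝕜 v x)
    (hv0 : v x ≠ 0) (w : E) :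
    fderiv 𝕜 (fun y => u y / v y) x w
      = (v x * fderiv 𝕜 u x w - u x * fderiv 𝕜 v x w) / v x ^ 2 := by
  have hinv : HasFDerivAt (fun y => (v y)⁻¹)
      ((-mulLeftRight 𝕜 𝕜' (v x)⁻¹ (v x)⁻¹).comp (fderiv 𝕜 v x)) x :=
    (hasFDerivAt_inv' hv0).comp x hv.hasFDerivAt
  simp only [div_eq_mul_inv]
  rw [(hu.hasFDerivAt.fun_mul hinv).fderiv]
  simp only [neg_comp, smul_neg, add_apply, neg_apply, smul_apply, comp_apply,
    mulLeftRight_apply, smul_eq_mul]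
  field_simp
  ring

theorem pdx_div {N : ℕ} (p : Fin N) {f g : (Fin N → ℝ) → (Fin N → ℤ) → ℂ}
    {x : Fin N → ℝ} {n : Fin N → ℤ} (hf : DifferentiableAt ℝ (fun y => f y n) x)
    (hg : DifferentiableAt ℝ (fun y => g y n) x) (hg0 : g x n ≠ 0) :
    pdx p (fun y m => f y m / g y m) x n
      = (g x n * pdx p f x n - f x n * pdx p g x n) / g x n ^ 2 :=
  fderiv_fun_div_apply hf hg hg0 _

theorem tau_implies_continuous_S_relation_general {N : ℕ}
    (τ : (Fin N → ℝ) → (Fin N → ℤ) → ℂ)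
    (par : Fin N → ℂ)
    (hτ : ∀ x n, τ x n ≠ 0)
    (hdiffble : ∀ n, Differentiable ℝ (fun x => τ x n))
    (hHirota : ∀ p q r : Fin N, p ≠ q → p ≠ r → q ≠ r →
      ∀ (x : Fin N → ℝ) (n : Fin N → ℤ),
      (par p - par q) * τ x (n + Pi.single p 1 + Pi.single q 1) * τ x (n + Pi.single r 1)
        + (par q - par r) * τ x (n + Pi.single q 1 + Pi.single r 1) * τ x (n + Pi.single p 1)
        + (par r - par p) * τ x (n + Pi.single r 1 + Pi.single p 1) * τ x (n + Pi.single q 1)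
        = 0)
    (hdd : ∀ p q : Fin N, p ≠ q → ∀ (x : Fin N → ℝ) (n : Fin N → ℤ),
      (par p - par q) * (τ x n * pdx p τ x (n + Pi.single q 1)
          - τ x (n + Pi.single q 1) * pdx p τ x n)
        = τ x n * τ x (n + Pi.single q 1)
          - τ x (n + Pi.single p 1) * τ x (n + Pi.single q 1 - Pi.single p 1))
    (S : Fin N → Fin N → (Fin N → ℝ) → (Fin N → ℤ) → ℂ)
    (hS : ∀ a b x n, S a b x n = τ x (n - Pi.single a 1 + Pi.single b 1) / τ x n)
    (a b p : Fin N) (hab : a ≠ b) (hap : a ≠ p) (hbp : b ≠ p) :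
    ∀ (x : Fin N → ℝ) (n : Fin N → ℤ),
      (par p - par a) * (par p - par b) * pdx p (S a b) x n
        = (par a - par b) * (S a p x n * S p b x n - S a b x n) := by
  intro x n
  have hquot : pdx p (S a b) x n
      = (τ x n * pdx p τ x (n - Pi.single a 1 + Pi.single b 1)
        - τ x (n - Pi.single a 1 + Pi.single b 1) * pdx p τ x n) / τ x n ^ 2 := by
    rw [funext₂ (hS a b)]
    exact pdx_div p (hdiffble _ x) (hdiffble _ x) (hτ x n)
  have hdd_b := hdd p b hbp.symm x (n - Pi.single a 1)
  have hdd_a := hdd p a hap.symm x (n - Pi.single a 1)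
  simp only [sub_add_cancel] at hdd_a
  have hHir : (par a - par b) * τ x (n - Pi.single p 1 + Pi.single b 1) * τ x (n - Pi.single a 1)
      + (par b - par p) * τ x (n - Pi.single a 1 + Pi.single b 1) * τ x (n - Pi.single p 1)
      + (par p - par a) * τ x n * τ x (n - Pi.single a 1 + Pi.single b 1 - Pi.single p 1)
      = 0 := by
    convert hHirota a b p hab hap hbp x (n - Pi.single a 1 - Pi.single p 1) using 6 <;> abel
  rw [hquot, hS a p, hS p b, hS a b]
  have hn := hτ x n
  refine mul_left_cancel₀ (hτ x (n - Pi.single a 1)) ?_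
  field_simp
  linear_combination (par p - par a) * τ x n * hdd_b
      - (par p - par b) * τ x (n - Pi.single a 1 + Pi.single b 1) * hdd_a
      - τ x (n - Pi.single a 1 + Pi.single p 1) * hHir

/-- the continuous relation for `S_{a,b} = (T_a⁻¹ T_b τ)/τ`
follows from the Hirota bilinear equation and the differential-difference
equation for `τ`. -/
theorem tau_implies_continuous_S_relation {N : ℕ}
    (τ : (Fin N → ℝ) → (Fin N → ℤ) → ℂ)
    (par : Fin N → ℂ) (hpar : Function.Injective par)
    (hτ : ∀ x n, τ x n ≠ 0)
    (hdiffble : ∀ n, Differentiable ℝ (fun x => τ x n))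
    (hHirota : ∀ p q r : Fin N, p ≠ q → p ≠ r → q ≠ r →
      ∀ (x : Fin N → ℝ) (n : Fin N → ℤ),
      (par p - par q) * τ x (n + Pi.single p 1 + Pi.single q 1) * τ x (n + Pi.single r 1)
        + (par q - par r) * τ x (n + Pi.single q 1 + Pi.single r 1) * τ x (n + Pi.single p 1)
        + (par r - par p) * τ x (n + Pi.single r 1 + Pi.single p 1) * τ x (n + Pi.single q 1)
        = 0)
    (hdd : ∀ p q : Fin N, p ≠ q → ∀ (x : Fin N → ℝ) (n : Fin N → ℤ),
      (par p - par q) * (τ x n * pdx p τ x (n + Pi.single q 1)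
          - τ x (n + Pi.single q 1) * pdx p τ x n)
        = τ x n * τ x (n + Pi.single q 1)
          - τ x (n + Pi.single p 1) * τ x (n + Pi.single q 1 - Pi.single p 1))
    (S : Fin N → Fin N → (Fin N → ℝ) → (Fin N → ℤ) → ℂ)
    (hS : ∀ a b x n, S a b x n = τ x (n - Pi.single a 1 + Pi.single b 1) / τ x n)
    (a b p : Fin N) (hab : a ≠ b) (hap : a ≠ p) (hbp : b ≠ p) :
    ∀ (x : Fin N → ℝ) (n : Fin N → ℤ),
      (par p - par a) * (par p - par b) * pdx p (S a b) x n
        = (par a - par b) * (S a p x n * S p b x n - S a b x n) :=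
  tau_implies_continuous_S_relation_general τ par hτ hdiffble hHirota hdd S hS a b p hab hap hbp
end

section
/- The matrix Darboux system is multidimensionally consistent: let G_{ij} be smooth N×N-matrix-valued functions of variables x_i (i in an index set of size ≥ 4) and J_i constant N×N matrices which pairwise commute, satisfying ∂_i G_{jk} = G_{ik} J_i G_{ji} for all pairwise distinct i,j,k. Then for pairwise distinct i,j,k,l, the two evaluations of the mixed derivative ∂_l∂_i G_{jk} obtained by substituting the system agree: ∂_l(G_{ik}J_iG_{ji}) = ∂_i(G_{lk}J_lG_{jl}) when both sides are expanded using the system, i.e. ∂_l∂_iG_{jk} = ∂_i∂_lG_{jk} follows algebraically from the system. -/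
/-- Entrywise partial derivative of a matrix-valued field in the `i`-th
coordinate direction. -/
noncomputable def pdM {M N : ℕ} (i : Fin M)
    (F : (Fin M → ℝ) → Matrix (Fin N) (Fin N) ℝ) (x : Fin M → ℝ) :
    Matrix (Fin N) (Fin N) ℝ :=
  Matrix.of fun α β => fderiv ℝ (fun y => F y α β) x (Pi.single i 1)

lemma pdM_mul3 {M N : ℕ} (i : Fin M)
    (F H : (Fin M → ℝ) → Matrix (Fin N) (Fin N) ℝ)
    (C : Matrix (Fin N) (Fin N) ℝ) (x : Fin M → ℝ)
    (hF : ∀ α β, DifferentiableAt ℝ (fun y => F y α β) x)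
    (hH : ∀ α β, DifferentiableAt ℝ (fun y => H y α β) x) :
    pdM i (fun y => F y * C * H y) x = pdM i F x * C * H x + F x * C * pdM i H x := by
  ext α β
  have key : ∀ δ γ : Fin N, HasFDerivAt (fun y => F y α γ * C γ δ * H y δ β)
      ((F x α γ * C γ δ) • fderiv ℝ (fun y => H y δ β) x
        + H x δ β • (C γ δ • fderiv ℝ (fun y => F y α γ) x)) x := by
    intro δ γ
    exact ((hF α γ).hasFDerivAt.mul_const (C γ δ)).mul (hH δ β).hasFDerivAt
  have hsum : HasFDerivAt (fun y => ∑ δ : Fin N, ∑ γ : Fin N, F y α γ * C γ δ * H y δ β)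
      (∑ δ : Fin N, ∑ γ : Fin N, ((F x α γ * C γ δ) • fderiv ℝ (fun y => H y δ β) x
        + H x δ β • (C γ δ • fderiv ℝ (fun y => F y α γ) x))) x := by
    apply HasFDerivAt.fun_sum; intro δ _; exact HasFDerivAt.fun_sum (fun γ _ => key δ γ)
  have heq : (fun y => (F y * C * H y) α β)
      = fun y => ∑ δ : Fin N, ∑ γ : Fin N, F y α γ * C γ δ * H y δ β := by
    funext y
    simp [Matrix.mul_apply, Finset.sum_mul]
  simp only [pdM, Matrix.of_apply]
  rw [heq, hsum.fderiv]
  simp only [Matrix.add_apply, Matrix.mul_apply]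
  simp only [ContinuousLinearMap.coe_sum', Finset.sum_apply, ContinuousLinearMap.add_apply,
    ContinuousLinearMap.smul_apply, smul_eq_mul, Finset.sum_add_distrib]
  rw [add_comm]
  congr 1
  · apply Finset.sum_congr rfl; intro a _
    rw [Finset.sum_mul]
    apply Finset.sum_congr rfl; intro b _
    simp only [Matrix.of_apply]
    try ring
  · apply Finset.sum_congr rfl; intro a _
    rw [Finset.sum_mul]
    apply Finset.sum_congr rfl; intro b _
    simp only [Matrix.of_apply]
    try ring

/-- multidimensional consistency of the matrix Darboux system. -/
theorem matrix_darboux_consistency {M N : ℕ} (hM : 4 ≤ M)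
    (G : Fin M → Fin M → (Fin M → ℝ) → Matrix (Fin N) (Fin N) ℝ)
    (J : Fin M → Matrix (Fin N) (Fin N) ℝ)
    (hJ : ∀ i j, J i * J j = J j * J i)
    (hsmooth : ∀ i j, i ≠ j → ∀ α β, ContDiff ℝ (⊤ : ℕ∞) (fun y => G i j y α β))
    (hsys : ∀ i j k, i ≠ j → i ≠ k → j ≠ k →
      ∀ x, pdM i (G j k) x = G i k x * J i * G j i x)
    (i j k l : Fin M)
    (hij : i ≠ j) (hik : i ≠ k) (hil : i ≠ l)
    (hjk : j ≠ k) (hjl : j ≠ l) (hkl : k ≠ l) :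
    ∀ x : Fin M → ℝ,
      pdM l (fun y => G i k y * J i * G j i y) x
        = pdM i (fun y => G l k y * J l * G j l y) x ∧
      pdM l (pdM i (G j k)) x = pdM i (pdM l (G j k)) x := by
  have key : ∀ x, pdM l (fun y => G i k y * J i * G j i y) x
      = pdM i (fun y => G l k y * J l * G j l y) x := by
    intro x
    have dG : ∀ a b, a ≠ b → ∀ α β, DifferentiableAt ℝ (fun y => G a b y α β) x :=
      fun a b h α β => ((hsmooth a b h α β).differentiable (by simp)).differentiableAt
    rw [pdM_mul3 l (G i k) (G j i) (J i) x (dG i k hik) (dG j i hij.symm),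
        pdM_mul3 i (G l k) (G j l) (J l) x (dG l k (Ne.symm (hkl.symm ∘ Eq.symm))) (dG j l hjl)]
    rw [hsys l i k hil.symm (fun h => hkl h.symm) hik,
        hsys l j i hjl.symm hil.symm (fun h => hij h.symm),
        hsys i l k hil hik (fun h => hkl h.symm),
        hsys i j l hij hil hjl]
    simp only [mul_assoc]
    exact add_comm _ _
  intro x
  refine ⟨key x, ?_⟩
  have e1 : pdM i (G j k) = fun y => G i k y * J i * G j i y :=
    funext (hsys i j k hij hik hjk)
  have e2 : pdM l (G j k) = fun y => G l k y * J l * G j l y :=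
    funext (hsys l j k hjl.symm (fun h => hkl h.symm) hjk)
  rw [e1, e2]
  exact key x
end
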